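/- Let H be a Q-graded Hopf quasigroup that is cocommutative (i.e. Δ_p(h) = h_{(1)} ⊗ h_{(2)} = h_{(2)} ⊗ h_{(1)} for all p ∈ Q, h ∈ H_p). Then S_{p^{-1}}(S_p(h)) = h for all p ∈ Q, h ∈ H_p. -/
import Mathlib


open TensorProduct

universe u v w

/-- A quasigroup: a set with product, identity `e`, and two-sided inverses satisfying
`p⁻¹(pq) = q` and `(qp)p⁻¹ = q`. -/
structure QuasigroupStruct (Q : Type u) where
  mul : Q → Q → Q
  one : Q
  inv : Q → Q
  mul_one : ∀ p, mul p one = p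
  one_mul : ∀ p, mul one p = p
  inv_mul_cancel : ∀ p q, mul (inv p) (mul p q) = q
  mul_inv_cancel : ∀ p q, mul (mul q p) (inv p) = q

namespace QuasigroupStruct

variable {Q : Type u} (G : QuasigroupStruct Q)

lemma inv_mul_self (p : Q) : G.mul (G.inv p) p = G.one := by
  have h := G.inv_mul_cancel p G.one
  rwa [G.mul_one] at h

lemma mul_inv_self (p : Q) : G.mul p (G.inv p) = G.one := by
  have h := G.mul_inv_cancel p G.one
  rwa [G.one_mul] at h

lemma inv_inv (p : Q) : G.inv (G.inv p) = p := by
  have h := G.inv_mul_cancel (G.inv p) p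
  rw [G.inv_mul_self p] at h
  rwa [G.mul_one] at h

lemma mul_inv_cancel_left (p q : Q) : G.mul p (G.mul (G.inv p) q) = q := by
  have h := G.inv_mul_cancel (G.inv p) q
  rwa [G.inv_inv] at h

lemma inv_mul_cancel_right (p q : Q) : G.mul (G.mul q (G.inv p)) p = q := by
  have h := G.mul_inv_cancel (G.inv p) q
  rwa [G.inv_inv] at h

lemma mul_inv_rev (p q : Q) : G.inv (G.mul p q) = G.mul (G.inv q) (G.inv p) := by
  have h1 : G.mul q (G.inv (G.mul p q)) = G.inv p := by
    have h := G.mul_inv_cancel (G.mul p q) (G.inv p)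
    rwa [G.inv_mul_cancel p q] at h
  calc G.inv (G.mul p q)
      = G.mul (G.inv q) (G.mul q (G.inv (G.mul p q))) := (G.inv_mul_cancel q _).symm
    _ = G.mul (G.inv q) (G.inv p) := by rw [h1]

lemma inv_one : G.inv G.one = G.one := by
  have h := G.inv_mul_cancel G.one G.one
  rwa [G.one_mul, G.mul_one] at h

end QuasigroupStruct

/-- Transport along an equality of grades, as a linear map. -/
def gcl {Q : Type u} {H : Q → Type w} {k : Type v} [CommSemiring k]
    [∀ p, AddCommMonoid (H p)] [∀ p, Module k (H p)] {p q : Q} (e : p = q) :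
    H p →ₗ[k] H q := by subst e; exact LinearMap.id

/-- A `Q`-graded Hopf quasigroup: a family of coassociative counital coalgebras `H p`
with a (not necessarily associative) graded multiplication, unit and antipode family,
such that the multiplications and the unit are coalgebra maps and the antipode
satisfies the Hopf quasigroup axioms. -/
structure GradedHopfQuasigroup (k : Type v) [CommRing k] {Q : Type u} (G : QuasigroupStruct Q)
    (H : Q → Type w) [∀ p, AddCommGroup (H p)] [∀ p, Module k (H p)]
    [∀ p, Coalgebra k (H p)] where
  mul : ∀ p q, H p →ₗ[k] H q →ₗ[k] H (G.mul p q)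
  one : H G.one
  antipode : ∀ p, H p →ₗ[k] H (G.inv p)
  mul_one' : ∀ (p : Q) (h : H p), gcl (k := k) (G.mul_one p) ((mul p G.one h) one) = h
  one_mul' : ∀ (p : Q) (h : H p), gcl (k := k) (G.one_mul p) ((mul G.one p one) h) = h
  comul_mul : ∀ (p q : Q) (h : H p) (g : H q),
    Coalgebra.comul (R := k) ((mul p q h) g) =
      (TensorProduct.map (TensorProduct.lift (mul p q)) (TensorProduct.lift (mul p q)))
        ((TensorProduct.tensorTensorTensorComm k (H p) (H p) (H q) (H q))
          (Coalgebra.comul h ⊗ₜ[k] Coalgebra.comul g))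
  counit_mul : ∀ (p q : Q) (h : H p) (g : H q),
    Coalgebra.counit (R := k) ((mul p q h) g) =
      Coalgebra.counit (R := k) h * Coalgebra.counit (R := k) g
  comul_one : Coalgebra.comul (R := k) one = one ⊗ₜ[k] one
  counit_one : Coalgebra.counit (R := k) one = 1
  /-- `S (h₁) (h₂ g) = ε(h) g` -/
  antipode_mul_left : ∀ (p q : Q) (h : H p) (g : H q),
    TensorProduct.lift
      (((mul (G.inv p) (G.mul p q)).comp (antipode p)).compl₂ ((mul p q).flip g))
      (Coalgebra.comul h)
      = gcl (k := k) (G.inv_mul_cancel p q).symm (Coalgebra.counit (R := k) h • g)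
  /-- `h₁ (S (h₂) g) = ε(h) g` -/
  antipode_mul_left' : ∀ (p q : Q) (h : H p) (g : H q),
    TensorProduct.lift
      ((mul p (G.mul (G.inv p) q)).compl₂ (((mul (G.inv p) q).flip g).comp (antipode p)))
      (Coalgebra.comul h)
      = gcl (k := k) (G.mul_inv_cancel_left p q).symm (Coalgebra.counit (R := k) h • g)
  /-- `(g S (h₁)) h₂ = ε(h) g` -/
  antipode_mul_right : ∀ (p q : Q) (h : H p) (g : H q),
    TensorProduct.lift
      ((mul (G.mul q (G.inv p)) p).comp ((mul q (G.inv p) g).comp (antipode p)))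
      (Coalgebra.comul h)
      = gcl (k := k) (G.inv_mul_cancel_right p q).symm (Coalgebra.counit (R := k) h • g)
  /-- `(g h₁) S (h₂) = ε(h) g` -/
  antipode_mul_right' : ∀ (p q : Q) (h : H p) (g : H q),
    TensorProduct.lift
      (((mul (G.mul q p) (G.inv p)).comp (mul q p g)).compl₂ (antipode p))
      (Coalgebra.comul h)
      = gcl (k := k) (G.mul_inv_cancel p q).symm (Coalgebra.counit (R := k) h • g)

variable {k : Type v} [Field k] {Q : Type u} {G : QuasigroupStruct Q}
  {H : Q → Type w} [∀ p, AddCommGroup (H p)] [∀ p, Module k (H p)]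
  [∀ p, Coalgebra k (H p)]

namespace GHQAux

variable [DecidableEq Q] (A : GradedHopfQuasigroup k G H)

local notation "M" => DirectSum Q H

noncomputable def lofH (p : Q) : H p →ₗ[k] M := DirectSum.lof k Q H p

lemma lofH_gcl {p q : Q} (e : p = q) (x : H p) :
    lofH (k := k) q (gcl (k := k) e x) = lofH (k := k) p x := by
  subst e; rfl

lemma lofH_inj (p : Q) {x y : H p} (h : lofH (k := k) p x = lofH (k := k) p y) : x = y := by
  have := congrArg (fun z => DirectSum.component k Q H p z) h
  simpa [lofH, DirectSum.component.lof_self] using this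

noncomputable def mM : M →ₗ[k] M →ₗ[k] M :=
  DirectSum.toModule k Q _ fun p =>
    (DirectSum.toModule k Q (H p →ₗ[k] M) fun q =>
      ((A.mul p q).flip.compr₂ (lofH (G.mul p q)))).flip

noncomputable def SM : M →ₗ[k] M :=
  DirectSum.toModule k Q _ fun p => (lofH (G.inv p)).comp (A.antipode p)

noncomputable def εM : M →ₗ[k] k :=
  DirectSum.toModule k Q k fun _ => Coalgebra.counit

noncomputable def ΔM : M →ₗ[k] M ⊗[k] M :=
  DirectSum.toModule k Q _ fun p =>
    (TensorProduct.map (lofH p) (lofH p)).comp Coalgebra.comul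

noncomputable def oneM : M := lofH (k := k) G.one A.one

@[simp] lemma mM_lof (p q : Q) (a : H p) (b : H q) :
    mM A (lofH (k := k) p a) (lofH (k := k) q b)
      = lofH (k := k) (G.mul p q) (A.mul p q a b) := by
  simp [mM, lofH, DirectSum.toModule_lof]

@[simp] lemma SM_lof (p : Q) (a : H p) :
    SM A (lofH (k := k) p a) = lofH (k := k) (G.inv p) (A.antipode p a) := by
  simp [SM, lofH, DirectSum.toModule_lof]

@[simp] lemma εM_lof (p : Q) (a : H p) :
    εM (k := k) (H := H) (lofH (k := k) p a) = Coalgebra.counit (R := k) a := by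
  simp [εM, lofH, DirectSum.toModule_lof]

@[simp] lemma ΔM_lof (p : Q) (a : H p) :
    ΔM (k := k) (H := H) (lofH (k := k) p a)
      = TensorProduct.map (lofH p) (lofH p) (Coalgebra.comul (R := k) a) := by
  simp [ΔM, lofH, DirectSum.toModule_lof]


set_option linter.unusedSectionVars false
open scoped Coalgebra
set_option synthInstance.maxHeartbeats 400000
set_option maxHeartbeats 1000000

open Coalgebra in
noncomputable def coalgM : Coalgebra k M where
  comul := ΔM (k := k) (H := H)
  counit := εM (k := k) (H := H)
  coassoc := by
    apply DirectSum.linearMap_ext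
    intro p
    apply LinearMap.ext
    intro h
    have key := Coalgebra.sum_tmul_tmul_eq (ℛ k h) (fun i => ℛ k _) (fun i => ℛ k _)
    have key2 := congrArg (TensorProduct.map (lofH (k := k) p)
      (TensorProduct.map (lofH (k := k) p) (lofH (k := k) p))) key
    simp only [map_sum, TensorProduct.map_tmul] at key2
    set r := ℛ k h
    simp only [LinearMap.coe_comp, Function.comp_apply, DirectSum.lof_eq_of]
    rw [show (DirectSum.of H p h : M) = lofH (k := k) p h from rfl, ΔM_lof, ← r.eq]
    simp only [map_sum, TensorProduct.map_tmul, LinearMap.rTensor_tmul, LinearMap.lTensor_tmul,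
      ΔM_lof]
    calc ∑ i ∈ r.index,
          (TensorProduct.assoc k M M M)
            ((TensorProduct.map (lofH p) (lofH p) (comul (r.left i))) ⊗ₜ[k] lofH p (r.right i))
        = ∑ i ∈ r.index, ∑ j ∈ (ℛ k (r.left i)).index,
            lofH (k := k) p ((ℛ k (r.left i)).left j) ⊗ₜ[k]
              (lofH p ((ℛ k (r.left i)).right j) ⊗ₜ[k] lofH p (r.right i)) := by
          refine Finset.sum_congr rfl fun i _ => ?_
          rw [← (ℛ k (r.left i)).eq]
          simp [TensorProduct.sum_tmul, map_sum]
      _ = ∑ i ∈ r.index, ∑ j ∈ (ℛ k (r.right i)).index,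
            lofH (k := k) p (r.left i) ⊗ₜ[k]
              (lofH p ((ℛ k (r.right i)).left j) ⊗ₜ[k] lofH p ((ℛ k (r.right i)).right j)) :=
          key2
      _ = ∑ i ∈ r.index, lofH (k := k) p (r.left i) ⊗ₜ[k]
            (TensorProduct.map (lofH p) (lofH p) (comul (r.right i))) := by
          refine Finset.sum_congr rfl fun i _ => ?_
          rw [← (ℛ k (r.right i)).eq]
          simp [TensorProduct.tmul_sum, map_sum]
  rTensor_counit_comp_comul := by
    apply DirectSum.linearMap_ext
    intro p
    apply LinearMap.ext
    intro h
    have key := Coalgebra.sum_counit_tmul_eq (R := k) (ℛ k h)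
    have key2 := congrArg (TensorProduct.map LinearMap.id (lofH (k := k) p)) key
    simp only [map_sum, TensorProduct.map_tmul, LinearMap.id_coe, id_eq] at key2
    simp only [LinearMap.coe_comp, Function.comp_apply, DirectSum.lof_eq_of]
    rw [show (DirectSum.of H p h : M) = lofH (k := k) p h from rfl, ΔM_lof, ← (ℛ k h).eq]
    simpa [map_sum] using key2
  lTensor_counit_comp_comul := by
    apply DirectSum.linearMap_ext
    intro p
    apply LinearMap.ext
    intro h
    have key := Coalgebra.sum_tmul_counit_eq (R := k) (ℛ k h)
    have key2 := congrArg (TensorProduct.map (lofH (k := k) p) LinearMap.id) key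
    simp only [map_sum, TensorProduct.map_tmul, LinearMap.id_coe, id_eq] at key2
    simp only [LinearMap.coe_comp, Function.comp_apply, DirectSum.lof_eq_of]
    rw [show (DirectSum.of H p h : M) = lofH (k := k) p h from rfl, ΔM_lof, ← (ℛ k h).eq]
    simpa [map_sum] using key2



lemma lift_add'' {P : Type*} [AddCommGroup P] [Module k P] (f g : M →ₗ[k] M →ₗ[k] P) :
    TensorProduct.lift (f + g) = TensorProduct.lift f + TensorProduct.lift g :=
  TensorProduct.ext' fun x y => by simp

lemma lift_zero'' {P : Type*} [AddCommGroup P] [Module k P] :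
    TensorProduct.lift (0 : M →ₗ[k] M →ₗ[k] P) = 0 :=
  TensorProduct.ext' fun x y => by simp

/-- `x ⊗ y ↦ S x ⬝ (y ⬝ g)` -/
noncomputable def bil1 (g : M) : M →ₗ[k] M →ₗ[k] M :=
  LinearMap.mk₂ k (fun x y => mM A (SM A x) (mM A y g))
    (by intros; simp) (by intros; simp) (by intros; simp) (by intros; simp)

/-- `x ⊗ y ↦ (g ⬝ S x) ⬝ y` -/
noncomputable def bil3 (g : M) : M →ₗ[k] M →ₗ[k] M :=
  LinearMap.mk₂ k (fun x y => mM A (mM A g (SM A x)) y)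
    (by intros; simp) (by intros; simp) (by intros; simp) (by intros; simp)

/-- `x ⊗ y ↦ (g ⬝ x) ⬝ S y` -/
noncomputable def bil4 (g : M) : M →ₗ[k] M →ₗ[k] M :=
  LinearMap.mk₂ k (fun x y => mM A (mM A g x) (SM A y))
    (by intros; simp) (by intros; simp) (by intros; simp) (by intros; simp)

lemma bil1_add (g g' : M) : bil1 A (g + g') = bil1 A g + bil1 A g' := by
  apply LinearMap.ext₂; intros; simp [bil1]
lemma bil3_add (g g' : M) : bil3 A (g + g') = bil3 A g + bil3 A g' := by
  apply LinearMap.ext₂; intros; simp [bil3]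
lemma bil4_add (g g' : M) : bil4 A (g + g') = bil4 A g + bil4 A g' := by
  apply LinearMap.ext₂; intros; simp [bil4]

lemma T1 (a g : M) :
    TensorProduct.lift (bil1 A g) (ΔM (k := k) (H := H) a) = εM (k := k) (H := H) a • g := by
  induction a using DirectSum.induction_on with
  | zero => simp
  | add x y hx hy => simp [map_add, hx, hy, add_smul]
  | of p h =>
    rw [show (DirectSum.of H p h : M) = lofH (k := k) p h from rfl]
    induction g using DirectSum.induction_on with
    | zero =>
      have : bil1 (G := G) A 0 = 0 := by apply LinearMap.ext₂; intros; simp [bil1]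
      simp [this, lift_zero'']
    | add x y hx hy => rw [bil1_add, lift_add'']; simp only [LinearMap.add_apply, hx, hy, smul_add]
    | of q g =>
      rw [show (DirectSum.of H q g : M) = lofH (k := k) q g from rfl]
      have ax := A.antipode_mul_left p q h g
      rw [← (ℛ k h).eq] at ax
      rw [ΔM_lof, ← (ℛ k h).eq]
      simp only [map_sum, TensorProduct.lift.tmul, LinearMap.compl₂_apply,
        LinearMap.comp_apply, LinearMap.flip_apply] at ax
      have := congrArg (lofH (k := k) (G.mul (G.inv p) (G.mul p q))) ax
      rw [lofH_gcl, map_sum] at this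
      simp only [map_sum, TensorProduct.map_tmul, TensorProduct.lift.tmul, ΔM_lof, εM_lof,
        bil1, LinearMap.mk₂_apply, mM_lof, SM_lof, map_smul]
      rw [← map_smul]
      exact this

lemma T3 (a g : M) :
    TensorProduct.lift (bil3 A g) (ΔM (k := k) (H := H) a) = εM (k := k) (H := H) a • g := by
  induction a using DirectSum.induction_on with
  | zero => simp
  | add x y hx hy => simp [map_add, hx, hy, add_smul]
  | of p h =>
    rw [show (DirectSum.of H p h : M) = lofH (k := k) p h from rfl]
    induction g using DirectSum.induction_on with
    | zero =>
      have : bil3 (G := G) A 0 = 0 := by apply LinearMap.ext₂; intros; simp [bil3]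
      simp [this, lift_zero'']
    | add x y hx hy => rw [bil3_add, lift_add'']; simp only [LinearMap.add_apply, hx, hy, smul_add]
    | of q g =>
      rw [show (DirectSum.of H q g : M) = lofH (k := k) q g from rfl]
      have ax := A.antipode_mul_right p q h g
      rw [← (ℛ k h).eq] at ax
      rw [ΔM_lof, ← (ℛ k h).eq]
      simp only [map_sum, TensorProduct.lift.tmul, LinearMap.comp_apply] at ax
      have := congrArg (lofH (k := k) (G.mul (G.mul q (G.inv p)) p)) ax
      rw [lofH_gcl, map_sum] at this
      simp only [map_sum, TensorProduct.map_tmul, TensorProduct.lift.tmul, ΔM_lof, εM_lof,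
        bil3, LinearMap.mk₂_apply, mM_lof, SM_lof, map_smul]
      rw [← map_smul]
      exact this

lemma T4 (a g : M) :
    TensorProduct.lift (bil4 A g) (ΔM (k := k) (H := H) a) = εM (k := k) (H := H) a • g := by
  induction a using DirectSum.induction_on with
  | zero => simp
  | add x y hx hy => simp [map_add, hx, hy, add_smul]
  | of p h =>
    rw [show (DirectSum.of H p h : M) = lofH (k := k) p h from rfl]
    induction g using DirectSum.induction_on with
    | zero =>
      have : bil4 (G := G) A 0 = 0 := by apply LinearMap.ext₂; intros; simp [bil4]
      simp [this, lift_zero'']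
    | add x y hx hy => rw [bil4_add, lift_add'']; simp only [LinearMap.add_apply, hx, hy, smul_add]
    | of q g =>
      rw [show (DirectSum.of H q g : M) = lofH (k := k) q g from rfl]
      have ax := A.antipode_mul_right' p q h g
      rw [← (ℛ k h).eq] at ax
      rw [ΔM_lof, ← (ℛ k h).eq]
      simp only [map_sum, TensorProduct.lift.tmul, LinearMap.compl₂_apply,
        LinearMap.comp_apply] at ax
      have := congrArg (lofH (k := k) (G.mul (G.mul q p) (G.inv p))) ax
      rw [lofH_gcl, map_sum] at this
      simp only [map_sum, TensorProduct.map_tmul, TensorProduct.lift.tmul, ΔM_lof, εM_lof,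
        bil4, LinearMap.mk₂_apply, mM_lof, SM_lof, map_smul]
      rw [← map_smul]
      exact this


lemma Tmul_one (a : M) : mM A a (oneM (k := k) A) = a := by
  induction a using DirectSum.induction_on with
  | zero => simp
  | add x y hx hy => simp [map_add, hx, hy]
  | of p h =>
    rw [show (DirectSum.of H p h : M) = lofH (k := k) p h from rfl, oneM, mM_lof]
    conv_rhs => rw [← A.mul_one' p h, lofH_gcl]

lemma Tone_mul (a : M) : mM A (oneM (k := k) A) a = a := by
  induction a using DirectSum.induction_on with
  | zero => simp
  | add x y hx hy => simp [map_add, hx, hy]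
  | of p h =>
    rw [show (DirectSum.of H p h : M) = lofH (k := k) p h from rfl, oneM, mM_lof]
    conv_rhs => rw [← A.one_mul' p h, lofH_gcl]

lemma TcounitMul (a b : M) :
    εM (k := k) (H := H) (mM A a b) = εM (k := k) (H := H) a * εM (k := k) (H := H) b := by
  induction a using DirectSum.induction_on with
  | zero => simp
  | add x y hx hy => simp [map_add, hx, hy, add_mul]
  | of p h =>
    rw [show (DirectSum.of H p h : M) = lofH (k := k) p h from rfl]
    induction b using DirectSum.induction_on with
    | zero => simp
    | add x y hx hy => simp [map_add, hx, hy, mul_add]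
    | of q g =>
      rw [show (DirectSum.of H q g : M) = lofH (k := k) q g from rfl, mM_lof]
      simp [A.counit_mul]

lemma TΔone : ΔM (k := k) (H := H) (oneM (k := k) A) = oneM (k := k) A ⊗ₜ[k] oneM (k := k) A := by
  rw [oneM, ΔM_lof, A.comul_one]; simp

lemma Tεone : εM (k := k) (H := H) (oneM (k := k) A) = 1 := by
  rw [oneM, εM_lof, A.counit_one]

/-- componentwise multiplication on `M ⊗ M` -/
noncomputable def m2 : M ⊗[k] M →ₗ[k] M ⊗[k] M →ₗ[k] M ⊗[k] M :=
  TensorProduct.curry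
    ((TensorProduct.map (TensorProduct.lift (mM A)) (TensorProduct.lift (mM A))).comp
      (TensorProduct.tensorTensorTensorComm k M M M M).toLinearMap)

@[simp] lemma m2_tmul (a b c d : M) :
    m2 A (a ⊗ₜ[k] b) (c ⊗ₜ[k] d) = mM A a c ⊗ₜ[k] mM A b d := by
  simp [m2, TensorProduct.curry_apply, TensorProduct.tensorTensorTensorComm_tmul]

lemma TcomulMul (a b : M) :
    ΔM (k := k) (H := H) (mM A a b) = m2 A (ΔM (k := k) (H := H) a) (ΔM (k := k) (H := H) b) := by
  induction a using DirectSum.induction_on with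
  | zero => simp
  | add x y hx hy => simp [map_add, hx, hy]
  | of p h =>
    rw [show (DirectSum.of H p h : M) = lofH (k := k) p h from rfl]
    induction b using DirectSum.induction_on with
    | zero => simp
    | add x y hx hy => simp [map_add, hx, hy]
    | of q g =>
      rw [show (DirectSum.of H q g : M) = lofH (k := k) q g from rfl, mM_lof, ΔM_lof,
        A.comul_mul, ΔM_lof, ΔM_lof, ← (ℛ k h).eq, ← (ℛ k g).eq]
      simp only [map_sum, TensorProduct.sum_tmul, TensorProduct.tmul_sum,
        TensorProduct.tensorTensorTensorComm_tmul, TensorProduct.map_tmul,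
        TensorProduct.lift.tmul, LinearMap.sum_apply, m2_tmul, mM_lof]


/-- A chosen finite representation of an element of `M ⊗ M` as a sum of pure tensors. -/
noncomputable def rp (t : (DirectSum Q H) ⊗[k] (DirectSum Q H)) : Finset (M × M) :=
  (TensorProduct.exists_finset (R := k) t).choose

lemma rp_eq (t : (DirectSum Q H) ⊗[k] (DirectSum Q H)) :
    t = ∑ z ∈ rp (k := k) t, z.1 ⊗ₜ[k] z.2 :=
  (TensorProduct.exists_finset (R := k) t).choose_spec

lemma CL (a : M) :
    ∑ z ∈ rp (k := k) (ΔM (k := k) (H := H) a), εM (k := k) (H := H) z.1 • z.2 = a := by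
  letI : Coalgebra k M := coalgM (k := k) (H := H)
  have key := Coalgebra.rTensor_counit_comul (R := k) (A := M) a
  have e : Coalgebra.comul (R := k) (A := M) a = ΔM (k := k) (H := H) a := rfl
  have e2 : Coalgebra.counit (R := k) (A := M) = εM (k := k) (H := H) := rfl
  rw [e, e2, rp_eq (ΔM (k := k) (H := H) a)] at key
  have := congrArg (TensorProduct.lid k M) key
  simpa [map_sum] using this

lemma CR (a : M) :
    ∑ z ∈ rp (k := k) (ΔM (k := k) (H := H) a), εM (k := k) (H := H) z.2 • z.1 = a := by
  letI : Coalgebra k M := coalgM (k := k) (H := H)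
  have key := Coalgebra.lTensor_counit_comul (R := k) (A := M) a
  have e : Coalgebra.comul (R := k) (A := M) a = ΔM (k := k) (H := H) a := rfl
  have e2 : Coalgebra.counit (R := k) (A := M) = εM (k := k) (H := H) := rfl
  rw [e, e2, rp_eq (ΔM (k := k) (H := H) a)] at key
  have := congrArg (TensorProduct.rid k M) key
  simpa [map_sum] using this

/-- Element-level coassociativity on `M`. -/
lemma R3elt (a : M) :
    ∑ z ∈ rp (k := k) (ΔM (k := k) (H := H) a),
      ∑ u ∈ rp (k := k) (ΔM (k := k) (H := H) z.1), u.1 ⊗ₜ[k] (u.2 ⊗ₜ[k] z.2)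
    = ∑ z ∈ rp (k := k) (ΔM (k := k) (H := H) a),
      ∑ u ∈ rp (k := k) (ΔM (k := k) (H := H) z.2), z.1 ⊗ₜ[k] (u.1 ⊗ₜ[k] u.2) := by
  letI : Coalgebra k M := coalgM (k := k) (H := H)
  have key := Coalgebra.coassoc_apply (R := k) (A := M) a
  have e : Coalgebra.comul (R := k) (A := M) = ΔM (k := k) (H := H) := rfl
  rw [e] at key
  rw [rp_eq (ΔM (k := k) (H := H) a)] at key
  simp only [map_sum, LinearMap.rTensor_tmul, LinearMap.lTensor_tmul] at key
  calc ∑ z ∈ rp (k := k) (ΔM (k := k) (H := H) a),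
        ∑ u ∈ rp (k := k) (ΔM (k := k) (H := H) z.1), u.1 ⊗ₜ[k] (u.2 ⊗ₜ[k] z.2)
      = ∑ z ∈ rp (k := k) (ΔM (k := k) (H := H) a),
          (TensorProduct.assoc k M M M) ((ΔM (k := k) (H := H) z.1) ⊗ₜ[k] z.2) := by
        refine Finset.sum_congr rfl fun z _ => ?_
        conv_rhs => rw [rp_eq (ΔM (k := k) (H := H) z.1)]
        simp [TensorProduct.sum_tmul, map_sum]
    _ = ∑ z ∈ rp (k := k) (ΔM (k := k) (H := H) a), z.1 ⊗ₜ[k] (ΔM (k := k) (H := H) z.2) :=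
        key
    _ = _ := by
        refine Finset.sum_congr rfl fun z _ => ?_
        conv_lhs => rw [rp_eq (ΔM (k := k) (H := H) z.2)]
        simp [TensorProduct.tmul_sum]

/-- Element-level cocommutativity on `M`. -/
lemma cocomElt (hH : ∀ (p : Q) (h : H p),
      Coalgebra.comul (R := k) h = (TensorProduct.comm k (H p) (H p)) (Coalgebra.comul h))
    (a : M) :
    ∑ z ∈ rp (k := k) (ΔM (k := k) (H := H) a), z.2 ⊗ₜ[k] z.1
      = ∑ z ∈ rp (k := k) (ΔM (k := k) (H := H) a), z.1 ⊗ₜ[k] z.2 := by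
  have base : (TensorProduct.comm k M M) (ΔM (k := k) (H := H) a) = ΔM (k := k) (H := H) a := by
    induction a using DirectSum.induction_on with
    | zero => simp
    | add x y hx hy => simp [map_add, hx, hy]
    | of p h =>
      rw [show (DirectSum.of H p h : M) = lofH (k := k) p h from rfl, ΔM_lof]
      conv_rhs => rw [hH p h]
      rw [← (ℛ k h).eq]
      simp [map_sum]
  calc ∑ z ∈ rp (k := k) (ΔM (k := k) (H := H) a), z.2 ⊗ₜ[k] z.1
      = (TensorProduct.comm k M M) (ΔM (k := k) (H := H) a) := by
        conv_rhs => rw [rp_eq (ΔM (k := k) (H := H) a)]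
        simp [map_sum]
    _ = _ := by rw [base, ← rp_eq]


/-- `x ⊗ y ↦ S x ⬝ y` -/
noncomputable def bilSL : M →ₗ[k] M →ₗ[k] M :=
  LinearMap.mk₂ k (fun x y => mM A (SM A x) y)
    (by intros; simp) (by intros; simp) (by intros; simp) (by intros; simp)

lemma L1 (a : M) :
    TensorProduct.lift (bilSL A) (ΔM (k := k) (H := H) a)
      = εM (k := k) (H := H) a • oneM (k := k) A := by
  have t := T1 A a (oneM (k := k) A)
  have e : bil1 A (oneM (k := k) A) = bilSL A := by
    apply LinearMap.ext₂; intros; simp [bil1, bilSL, Tmul_one]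
  rwa [e] at t

lemma epsS (a : M) :
    εM (k := k) (H := H) (SM A a) = εM (k := k) (H := H) a := by
  have h1 := congrArg (εM (k := k) (H := H)) (L1 A a)
  rw [rp_eq (ΔM (k := k) (H := H) a)] at h1
  simp only [map_sum, TensorProduct.lift.tmul, bilSL, LinearMap.mk₂_apply, TcounitMul,
    map_smul, smul_eq_mul, Tεone, mul_one] at h1
  calc εM (k := k) (H := H) (SM A a)
      = ∑ z ∈ rp (k := k) (ΔM (k := k) (H := H) a),
          εM (k := k) (H := H) (SM A z.1) * εM (k := k) (H := H) z.2 := by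
        conv_lhs => rw [← CR (k := k) a]
        simp [map_sum, mul_comm]
    _ = _ := h1


lemma sum_eps_smul_r {N : Type*} [AddCommGroup N] [Module k N] (m : M) (F : M →ₗ[k] N) :
    ∑ w ∈ rp (k := k) (ΔM (k := k) (H := H) m), εM (k := k) (H := H) w.2 • F w.1 = F m := by
  simpa [map_sum, map_smul] using congrArg F (CR (k := k) m)

lemma sum_eps_smul_l {N : Type*} [AddCommGroup N] [Module k N] (m : M) (F : M →ₗ[k] N) :
    ∑ w ∈ rp (k := k) (ΔM (k := k) (H := H) m), εM (k := k) (H := H) w.1 • F w.2 = F m := by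
  simpa [map_sum, map_smul] using congrArg F (CL (k := k) m)

lemma T4sum (m g : M) :
    ∑ u ∈ rp (k := k) (ΔM (k := k) (H := H) m), mM A (mM A g u.1) (SM A u.2)
      = εM (k := k) (H := H) m • g := by
  have t := T4 A m g
  rw [rp_eq (ΔM (k := k) (H := H) m)] at t
  simpa [map_sum, TensorProduct.lift.tmul, bil4] using t

lemma T3sum (m g : M) :
    ∑ u ∈ rp (k := k) (ΔM (k := k) (H := H) m), mM A (mM A g (SM A u.1)) u.2
      = εM (k := k) (H := H) m • g := by
  have t := T3 A m g
  rw [rp_eq (ΔM (k := k) (H := H) m)] at t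
  simpa [map_sum, TensorProduct.lift.tmul, bil3] using t

lemma T1sum (m g : M) :
    ∑ u ∈ rp (k := k) (ΔM (k := k) (H := H) m), mM A (SM A u.1) (mM A u.2 g)
      = εM (k := k) (H := H) m • g := by
  have t := T1 A m g
  rw [rp_eq (ΔM (k := k) (H := H) m)] at t
  simpa [map_sum, TensorProduct.lift.tmul, bil1] using t

lemma L1sum (m : M) :
    ∑ u ∈ rp (k := k) (ΔM (k := k) (H := H) m), mM A (SM A u.1) u.2
      = εM (k := k) (H := H) m • oneM (k := k) A := by
  have t := L1 A m
  rw [rp_eq (ΔM (k := k) (H := H) m)] at t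
  simpa [map_sum, TensorProduct.lift.tmul, bilSL] using t


local notation "R[" a "]" => rp (k := k) (ΔM (k := k) (H := H) a)
local notation "ε[" a "]" => εM (k := k) (H := H) a
local notation "Δ[" a "]" => ΔM (k := k) (H := H) a

lemma liftΔ_sum {N : Type*} [AddCommGroup N] [Module k N] (b : M →ₗ[k] M →ₗ[k] N) (m : M) :
    TensorProduct.lift b Δ[m] = ∑ u ∈ R[m], b u.1 u.2 := by
  conv_lhs => rw [rp_eq (ΔM (k := k) (H := H) m)]
  simp [map_sum]

/-- auxiliary bilinear map `(α, β) ↦ ((g₁ ⬝ α) ⬝ S β) ⊗ g₂` -/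
noncomputable def bA (g1 g2 : M) : M →ₗ[k] M →ₗ[k] M ⊗[k] M :=
  LinearMap.mk₂ k (fun α β => (mM A (mM A g1 α) (SM A β)) ⊗ₜ[k] g2)
    (by intros; simp [map_add, TensorProduct.add_tmul])
    (by intros; simp [map_smul, TensorProduct.smul_tmul'])
    (by intros; simp [map_add, TensorProduct.add_tmul])
    (by intros; simp [map_smul, TensorProduct.smul_tmul'])

@[simp] lemma bA_apply (g1 g2 α β : M) :
    bA A g1 g2 α β = (mM A (mM A g1 α) (SM A β)) ⊗ₜ[k] g2 := rfl

lemma EA (a : M) :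
    ∑ z ∈ R[a], ∑ y ∈ R[SM A z.1], ∑ w ∈ R[z.2], ∑ u ∈ R[w.1], ∑ v ∈ R[w.2],
      (mM A (mM A y.1 u.1) (SM A u.2)) ⊗ₜ[k] (mM A (mM A y.2 v.1) (SM A v.2))
    = ΔM (k := k) (H := H) (SM A a) := by
  calc ∑ z ∈ R[a], ∑ y ∈ R[SM A z.1], ∑ w ∈ R[z.2], ∑ u ∈ R[w.1], ∑ v ∈ R[w.2],
        (mM A (mM A y.1 u.1) (SM A u.2)) ⊗ₜ[k] (mM A (mM A y.2 v.1) (SM A v.2))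
      = ∑ z ∈ R[a], ∑ y ∈ R[SM A z.1], ∑ w ∈ R[z.2], ∑ u ∈ R[w.1],
          ε[w.2] • ((mM A (mM A y.1 u.1) (SM A u.2)) ⊗ₜ[k] y.2) := by
        refine Finset.sum_congr rfl fun z _ => Finset.sum_congr rfl fun y _ =>
          Finset.sum_congr rfl fun w _ => Finset.sum_congr rfl fun u _ => ?_
        rw [← TensorProduct.tmul_sum, T4sum A w.2 y.2, TensorProduct.tmul_smul]
    _ = ∑ z ∈ R[a], ∑ y ∈ R[SM A z.1], ∑ u ∈ R[z.2],
          (mM A (mM A y.1 u.1) (SM A u.2)) ⊗ₜ[k] y.2 := by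
        refine Finset.sum_congr rfl fun z _ => Finset.sum_congr rfl fun y _ => ?_
        have e1 : ∀ m : M, ∑ u ∈ R[m], (mM A (mM A y.1 u.1) (SM A u.2)) ⊗ₜ[k] y.2
            = ((TensorProduct.lift (bA A y.1 y.2)).comp (ΔM (k := k) (H := H))) m := by
          intro m
          simp only [LinearMap.comp_apply, liftΔ_sum, bA_apply]
        calc ∑ w ∈ R[z.2], ∑ u ∈ R[w.1],
              ε[w.2] • ((mM A (mM A y.1 u.1) (SM A u.2)) ⊗ₜ[k] y.2)
            = ∑ w ∈ R[z.2], ε[w.2] •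
                ((TensorProduct.lift (bA A y.1 y.2)).comp (ΔM (k := k) (H := H))) w.1 := by
              refine Finset.sum_congr rfl fun w _ => ?_
              rw [← Finset.smul_sum, e1 w.1]
          _ = ((TensorProduct.lift (bA A y.1 y.2)).comp (ΔM (k := k) (H := H))) z.2 :=
              sum_eps_smul_r (k := k) z.2 _
          _ = _ := (e1 z.2).symm
    _ = ∑ z ∈ R[a], ∑ y ∈ R[SM A z.1], ε[z.2] • (y.1 ⊗ₜ[k] y.2) := by
        refine Finset.sum_congr rfl fun z _ => Finset.sum_congr rfl fun y _ => ?_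
        rw [← TensorProduct.sum_tmul, T4sum A z.2 y.1, TensorProduct.smul_tmul']
    _ = ∑ z ∈ R[a], ε[z.2] • ((ΔM (k := k) (H := H)).comp (SM A)) z.1 := by
        refine Finset.sum_congr rfl fun z _ => ?_
        rw [← Finset.smul_sum]
        congr 1
        rw [LinearMap.comp_apply]
        exact (rp_eq _).symm
    _ = ΔM (k := k) (H := H) (SM A a) := sum_eps_smul_r (k := k) a _

variable (hH : ∀ (p : Q) (h : H p),
      Coalgebra.comul (R := k) h = (TensorProduct.comm k (H p) (H p)) (Coalgebra.comul h))

include hH in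
lemma W12elt (n : M) :
    ∑ v ∈ R[n], ∑ d ∈ R[v.2], d.1 ⊗ₜ[k] (v.1 ⊗ₜ[k] d.2)
      = ∑ v ∈ R[n], ∑ d ∈ R[v.2], v.1 ⊗ₜ[k] (d.1 ⊗ₜ[k] d.2) := by
  have s1 := congrArg ((TensorProduct.assoc k M M M).toLinearMap ∘ₗ
      (LinearMap.rTensor M (TensorProduct.comm k M M).toLinearMap) ∘ₗ
      (TensorProduct.assoc k M M M).symm.toLinearMap) (R3elt (k := k) n)
  simp only [map_sum, LinearMap.comp_apply, LinearEquiv.coe_coe,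
    TensorProduct.assoc_symm_tmul, LinearMap.rTensor_tmul, TensorProduct.comm_tmul,
    TensorProduct.assoc_tmul] at s1
  have s2 : ∀ z : M × M,
      ∑ u ∈ R[z.1], u.2 ⊗ₜ[k] (u.1 ⊗ₜ[k] z.2) = ∑ u ∈ R[z.1], u.1 ⊗ₜ[k] (u.2 ⊗ₜ[k] z.2) := by
    intro z
    have := congrArg (TensorProduct.map (LinearMap.id : M →ₗ[k] M)
      ((TensorProduct.mk k M M).flip z.2)) (cocomElt (k := k) hH z.1)
    simpa [map_sum] using this
  calc ∑ v ∈ R[n], ∑ d ∈ R[v.2], d.1 ⊗ₜ[k] (v.1 ⊗ₜ[k] d.2)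
      = ∑ z ∈ R[n], ∑ u ∈ R[z.1], u.2 ⊗ₜ[k] (u.1 ⊗ₜ[k] z.2) := s1.symm
    _ = ∑ z ∈ R[n], ∑ u ∈ R[z.1], u.1 ⊗ₜ[k] (u.2 ⊗ₜ[k] z.2) :=
        Finset.sum_congr rfl fun z _ => s2 z
    _ = _ := R3elt (k := k) n

include hH in
lemma SWAPelt (m : M) :
    (TensorProduct.tensorTensorTensorComm k M M M M)
        (TensorProduct.map (ΔM (k := k) (H := H)) (ΔM (k := k) (H := H))
          (ΔM (k := k) (H := H) m))
      = TensorProduct.map (ΔM (k := k) (H := H)) (ΔM (k := k) (H := H))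
          (ΔM (k := k) (H := H) m) := by
  have expand : TensorProduct.map (ΔM (k := k) (H := H)) (ΔM (k := k) (H := H))
      (ΔM (k := k) (H := H) m) = ∑ z ∈ R[m], Δ[z.1] ⊗ₜ[k] Δ[z.2] := by
    conv_lhs => rw [rp_eq (ΔM (k := k) (H := H) m)]
    simp [map_sum]
  have stepA : (∑ z ∈ R[m], Δ[z.1] ⊗ₜ[k] Δ[z.2])
      = ∑ z ∈ R[m], ∑ v ∈ R[z.2], (z.1 ⊗ₜ[k] v.1) ⊗ₜ[k] Δ[v.2] := by
    have s := congrArg ((TensorProduct.map (LinearMap.id : M ⊗[k] M →ₗ[k] M ⊗[k] M)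
        (ΔM (k := k) (H := H))) ∘ₗ (TensorProduct.assoc k M M M).symm.toLinearMap)
      (R3elt (k := k) m)
    simp only [map_sum, LinearMap.comp_apply, LinearEquiv.coe_coe,
      TensorProduct.assoc_symm_tmul, TensorProduct.map_tmul, LinearMap.id_coe, id_eq] at s
    calc ∑ z ∈ R[m], Δ[z.1] ⊗ₜ[k] Δ[z.2]
        = ∑ z ∈ R[m], ∑ u ∈ R[z.1], (u.1 ⊗ₜ[k] u.2) ⊗ₜ[k] Δ[z.2] := by
          refine Finset.sum_congr rfl fun z _ => ?_
          rw [← TensorProduct.sum_tmul]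
          congr 1
          exact rp_eq _
      _ = _ := s
  have stepB : ∀ z : M × M,
      (TensorProduct.tensorTensorTensorComm k M M M M)
          (∑ v ∈ R[z.2], (z.1 ⊗ₜ[k] v.1) ⊗ₜ[k] Δ[v.2])
        = ∑ v ∈ R[z.2], (z.1 ⊗ₜ[k] v.1) ⊗ₜ[k] Δ[v.2] := by
    intro z
    have w12 := congrArg (LinearMap.rTensor (M ⊗[k] M) ((TensorProduct.mk k M M) z.1))
      (W12elt (k := k) hH z.2)
    simp only [map_sum, LinearMap.rTensor_tmul, TensorProduct.mk_apply] at w12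
    calc (TensorProduct.tensorTensorTensorComm k M M M M)
            (∑ v ∈ R[z.2], (z.1 ⊗ₜ[k] v.1) ⊗ₜ[k] Δ[v.2])
        = ∑ v ∈ R[z.2], ∑ d ∈ R[v.2], (z.1 ⊗ₜ[k] d.1) ⊗ₜ[k] (v.1 ⊗ₜ[k] d.2) := by
          rw [map_sum]
          refine Finset.sum_congr rfl fun v _ => ?_
          conv_lhs => rw [rp_eq (ΔM (k := k) (H := H) v.2)]
          simp [TensorProduct.tmul_sum, map_sum, TensorProduct.tensorTensorTensorComm_tmul]
      _ = ∑ v ∈ R[z.2], ∑ d ∈ R[v.2], (z.1 ⊗ₜ[k] v.1) ⊗ₜ[k] (d.1 ⊗ₜ[k] d.2) := w12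
      _ = _ := by
          refine Finset.sum_congr rfl fun v _ => ?_
          rw [← TensorProduct.tmul_sum]
          congr 1
          exact (rp_eq _).symm
  rw [expand, stepA, map_sum]
  exact Finset.sum_congr rfl fun z _ => stepB z


/-- `x ⊗ c ↦ x ⬝ S c` -/
noncomputable def bSR : M →ₗ[k] M →ₗ[k] M :=
  LinearMap.mk₂ k (fun x c => mM A x (SM A c))
    (by intros; simp) (by intros; simp) (by intros; simp) (by intros; simp)

/-- `(x ⊗ y) ⊗ (c ⊗ d) ↦ (x ⬝ S c) ⊗ (y ⬝ S d)` -/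
noncomputable def KK : (M ⊗[k] M) ⊗[k] (M ⊗[k] M) →ₗ[k] M ⊗[k] M :=
  (TensorProduct.map (TensorProduct.lift (bSR A)) (TensorProduct.lift (bSR A))) ∘ₗ
    (TensorProduct.tensorTensorTensorComm k M M M M).toLinearMap

lemma KKexp (T : M ⊗[k] M) (γ : M) :
    KK A (T ⊗ₜ[k] Δ[γ])
      = ∑ v ∈ R[γ], (TensorProduct.map ((mM A).flip (SM A v.1)) ((mM A).flip (SM A v.2))) T := by
  conv_lhs => rw [rp_eq (ΔM (k := k) (H := H) γ)]
  rw [TensorProduct.tmul_sum, map_sum]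
  refine Finset.sum_congr rfl fun v _ => ?_
  induction T using TensorProduct.induction_on with
  | zero => simp
  | tmul x y =>
    simp [KK, TensorProduct.tensorTensorTensorComm_tmul, bSR]
  | add T T' hT hT' =>
    simp only [TensorProduct.add_tmul, map_add, hT, hT']

lemma comul_mul_sum (b c : M) :
    Δ[mM A b c] = ∑ y ∈ R[b], ∑ u ∈ R[c], (mM A y.1 u.1) ⊗ₜ[k] (mM A y.2 u.2) := by
  rw [TcomulMul]
  conv_lhs => rw [rp_eq (ΔM (k := k) (H := H) b), rp_eq (ΔM (k := k) (H := H) c)]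
  simp only [map_sum, LinearMap.sum_apply, m2_tmul]
  exact Finset.sum_comm

include hH in
lemma EB (a : M) :
    ∑ z ∈ R[a], ∑ y ∈ R[SM A z.1], ∑ w ∈ R[z.2], ∑ u ∈ R[w.1], ∑ v ∈ R[w.2],
      (mM A (mM A y.1 u.1) (SM A u.2)) ⊗ₜ[k] (mM A (mM A y.2 v.1) (SM A v.2))
    = TensorProduct.map (SM A) (SM A) (ΔM (k := k) (H := H) a) := by
  have psi_expand : ∀ (c1 c2 m : M),
      TensorProduct.map (TensorProduct.lift (bil4 A c1)) (TensorProduct.lift (bil4 A c2))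
        (TensorProduct.map (ΔM (k := k) (H := H)) (ΔM (k := k) (H := H)) Δ[m])
      = ∑ w ∈ R[m], ∑ u ∈ R[w.1], ∑ v ∈ R[w.2],
          (mM A (mM A c1 u.1) (SM A u.2)) ⊗ₜ[k] (mM A (mM A c2 v.1) (SM A v.2)) := by
    intro c1 c2 m
    conv_lhs => rw [rp_eq (ΔM (k := k) (H := H) m)]
    simp only [map_sum, TensorProduct.map_tmul]
    refine Finset.sum_congr rfl fun w _ => ?_
    conv_lhs => rw [rp_eq (ΔM (k := k) (H := H) w.1), rp_eq (ΔM (k := k) (H := H) w.2)]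
    simp only [TensorProduct.sum_tmul, TensorProduct.tmul_sum, map_sum,
      TensorProduct.map_tmul, TensorProduct.lift.tmul, bil4, LinearMap.mk₂_apply]
    exact Finset.sum_comm
  have psi_expand' : ∀ (c1 c2 m : M),
      TensorProduct.map (TensorProduct.lift (bil4 A c1)) (TensorProduct.lift (bil4 A c2))
        ((TensorProduct.tensorTensorTensorComm k M M M M)
          (TensorProduct.map (ΔM (k := k) (H := H)) (ΔM (k := k) (H := H)) Δ[m]))
      = ∑ w ∈ R[m], ∑ u ∈ R[w.1], ∑ v ∈ R[w.2],
          (mM A (mM A c1 u.1) (SM A v.1)) ⊗ₜ[k] (mM A (mM A c2 u.2) (SM A v.2)) := by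
    intro c1 c2 m
    conv_lhs => rw [rp_eq (ΔM (k := k) (H := H) m)]
    simp only [map_sum, TensorProduct.map_tmul]
    refine Finset.sum_congr rfl fun w _ => ?_
    conv_lhs => rw [rp_eq (ΔM (k := k) (H := H) w.1), rp_eq (ΔM (k := k) (H := H) w.2)]
    rw [TensorProduct.sum_tmul]
    simp only [TensorProduct.tmul_sum, map_sum,
      TensorProduct.tensorTensorTensorComm_tmul, TensorProduct.map_tmul,
      TensorProduct.lift.tmul]
    simp [bil4]
  calc ∑ z ∈ R[a], ∑ y ∈ R[SM A z.1], ∑ w ∈ R[z.2], ∑ u ∈ R[w.1], ∑ v ∈ R[w.2],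
        (mM A (mM A y.1 u.1) (SM A u.2)) ⊗ₜ[k] (mM A (mM A y.2 v.1) (SM A v.2))
      = ∑ z ∈ R[a], ∑ y ∈ R[SM A z.1], ∑ w ∈ R[z.2], ∑ u ∈ R[w.1], ∑ v ∈ R[w.2],
          (mM A (mM A y.1 u.1) (SM A v.1)) ⊗ₜ[k] (mM A (mM A y.2 u.2) (SM A v.2)) := by
        refine Finset.sum_congr rfl fun z _ => Finset.sum_congr rfl fun y _ => ?_
        rw [← psi_expand y.1 y.2 z.2, ← psi_expand' y.1 y.2 z.2, SWAPelt (k := k) hH z.2]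
    _ = ∑ z ∈ R[a], ∑ w ∈ R[z.2], ∑ v ∈ R[w.2],
          (TensorProduct.map ((mM A).flip (SM A v.1)) ((mM A).flip (SM A v.2)))
            Δ[mM A (SM A z.1) w.1] := by
        refine Finset.sum_congr rfl fun z _ => ?_
        rw [Finset.sum_comm]
        refine Finset.sum_congr rfl fun w _ => ?_
        calc ∑ y ∈ R[SM A z.1], ∑ u ∈ R[w.1], ∑ v ∈ R[w.2],
              (mM A (mM A y.1 u.1) (SM A v.1)) ⊗ₜ[k] (mM A (mM A y.2 u.2) (SM A v.2))
            = ∑ y ∈ R[SM A z.1], ∑ v ∈ R[w.2], ∑ u ∈ R[w.1],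
              (mM A (mM A y.1 u.1) (SM A v.1)) ⊗ₜ[k] (mM A (mM A y.2 u.2) (SM A v.2)) :=
              Finset.sum_congr rfl fun y _ => Finset.sum_comm
          _ = ∑ v ∈ R[w.2], ∑ y ∈ R[SM A z.1], ∑ u ∈ R[w.1],
              (mM A (mM A y.1 u.1) (SM A v.1)) ⊗ₜ[k] (mM A (mM A y.2 u.2) (SM A v.2)) :=
              Finset.sum_comm
          _ = _ := by
              refine Finset.sum_congr rfl fun v _ => ?_
              rw [comul_mul_sum, map_sum]
              refine Finset.sum_congr rfl fun y _ => ?_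
              rw [map_sum]
              simp
    _ = ∑ z ∈ R[a], ∑ u ∈ R[z.1], ∑ v ∈ R[z.2],
          (TensorProduct.map ((mM A).flip (SM A v.1)) ((mM A).flip (SM A v.2)))
            Δ[mM A (SM A u.1) u.2] := by
        have F := (KK A) ∘ₗ
          (TensorProduct.map ((ΔM (k := k) (H := H)) ∘ₗ TensorProduct.lift (bilSL A))
            (ΔM (k := k) (H := H))) ∘ₗ
          (TensorProduct.assoc k M M M).symm.toLinearMap
        have s := congrArg ((KK A) ∘ₗ
          (TensorProduct.map ((ΔM (k := k) (H := H)) ∘ₗ TensorProduct.lift (bilSL A))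
            (ΔM (k := k) (H := H))) ∘ₗ
          (TensorProduct.assoc k M M M).symm.toLinearMap) (R3elt (k := k) a)
        simp only [map_sum, LinearMap.comp_apply, LinearEquiv.coe_coe,
          TensorProduct.assoc_symm_tmul, TensorProduct.map_tmul,
          TensorProduct.lift.tmul, bilSL, LinearMap.mk₂_apply, KKexp] at s
        exact s.symm
    _ = ∑ z ∈ R[a], ε[z.1] • ((TensorProduct.map (SM A) (SM A)) ∘ₗ (ΔM (k := k) (H := H))) z.2
        := by
        refine Finset.sum_congr rfl fun z _ => ?_
        rw [Finset.sum_comm]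
        calc ∑ v ∈ R[z.2], ∑ u ∈ R[z.1],
              (TensorProduct.map ((mM A).flip (SM A v.1)) ((mM A).flip (SM A v.2)))
                Δ[mM A (SM A u.1) u.2]
            = ∑ v ∈ R[z.2], ε[z.1] • ((SM A v.1) ⊗ₜ[k] (SM A v.2)) := by
              refine Finset.sum_congr rfl fun v _ => ?_
              rw [← map_sum, ← map_sum (ΔM (k := k) (H := H)), L1sum, map_smul, TΔone,
                map_smul]
              simp [Tone_mul]
          _ = _ := by
              rw [← Finset.smul_sum]
              congr 1
              rw [LinearMap.comp_apply]
              conv_rhs => rw [rp_eq (ΔM (k := k) (H := H) z.2)]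
              simp [map_sum]
    _ = _ := sum_eps_smul_l (k := k) a _


include hH in
lemma DeltaS (a : M) :
    ΔM (k := k) (H := H) (SM A a) = TensorProduct.map (SM A) (SM A) (ΔM (k := k) (H := H) a) :=
  (EA A a).symm.trans (EB A hH a)

include hH in
lemma CCsum (m : M) :
    ∑ u ∈ R[m], mM A (SM A (SM A u.1)) (SM A u.2)
      = ε[m] • oneM (k := k) A := by
  have l2 : TensorProduct.lift (bilSL A) (ΔM (k := k) (H := H) (SM A m))
      = ε[m] • oneM (k := k) A := by rw [L1, epsS]
  rw [DeltaS A hH] at l2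
  conv_lhs at l2 => rw [rp_eq (ΔM (k := k) (H := H) m)]
  simpa [map_sum, TensorProduct.lift.tmul, bilSL] using l2

include hH in
lemma FF (a : M) : SM A (SM A a) = a := by
  calc SM A (SM A a)
      = ∑ z ∈ R[a], ε[z.2] • ((SM A).comp (SM A)) z.1 :=
        (sum_eps_smul_r (k := k) a ((SM A).comp (SM A))).symm
    _ = ∑ z ∈ R[a], ∑ u ∈ R[z.2], mM A (mM A (SM A (SM A z.1)) (SM A u.1)) u.2 := by
        refine Finset.sum_congr rfl fun z _ => ?_
        rw [T3sum A z.2 (SM A (SM A z.1))]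
        rfl
    _ = ∑ z ∈ R[a], ∑ u ∈ R[z.1], mM A (mM A (SM A (SM A u.1)) (SM A u.2)) z.2 := by
        have s := congrArg ((TensorProduct.lift (mM A)) ∘ₗ
          (TensorProduct.map (TensorProduct.lift (mM A)) (LinearMap.id : M →ₗ[k] M)) ∘ₗ
          (TensorProduct.assoc k M M M).symm.toLinearMap ∘ₗ
          (TensorProduct.map ((SM A) ∘ₗ (SM A))
            (TensorProduct.map (SM A) (LinearMap.id : M →ₗ[k] M)))) (R3elt (k := k) a)
        simp only [map_sum, LinearMap.comp_apply, LinearEquiv.coe_coe, TensorProduct.map_tmul,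
          TensorProduct.assoc_symm_tmul, TensorProduct.lift.tmul, LinearMap.id_coe, id_eq] at s
        exact s.symm
    _ = ∑ z ∈ R[a], ε[z.1] • z.2 := by
        refine Finset.sum_congr rfl fun z _ => ?_
        have : ∑ u ∈ R[z.1], mM A (mM A (SM A (SM A u.1)) (SM A u.2)) z.2
            = mM A (∑ u ∈ R[z.1], mM A (SM A (SM A u.1)) (SM A u.2)) z.2 := by
          rw [map_sum, LinearMap.sum_apply]
        rw [this, CCsum A hH, map_smul, LinearMap.smul_apply, Tone_mul]
    _ = a := by
        simpa using sum_eps_smul_l (k := k) a (LinearMap.id : M →ₗ[k] M)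

end GHQAux

/-- If `H` is cocommutative then `S_{p⁻¹} ∘ S_p = id`. -/
theorem gradedHopfQuasigroup_antipode_antipode_of_cocommutative
    (A : GradedHopfQuasigroup k G H)
    (hH : ∀ (p : Q) (h : H p),
      Coalgebra.comul (R := k) h
        = (TensorProduct.comm k (H p) (H p)) (Coalgebra.comul h))
    (p : Q) (h : H p) :
    gcl (k := k) (G.inv_inv p) (A.antipode (G.inv p) (A.antipode p h)) = h := by
  letI : DecidableEq Q := Classical.decEq Q
  have key := GHQAux.FF (k := k) A hH (GHQAux.lofH (k := k) p h)
  rw [GHQAux.SM_lof, GHQAux.SM_lof] at key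
  apply GHQAux.lofH_inj (k := k) p
  rw [GHQAux.lofH_gcl (G.inv_inv p)]
  exact key
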